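/- arXiv:0903.0086 — 6 statements merged into one kernel-verified Lean document; each statement's English description precedes it below -/
import Mathlib

section
/- Let ξ be a real number and x, y, z ∈ ℤ³. With L(v) := max(|v₁ - v₀ξ|, |v₂ - v₀ξ²|) and ‖v‖ := max(|v₀|,|v₁|,|v₂|), the 3×3 determinant det(x,y,z) (of the matrix whose rows are x, y, z) satisfies |det(x,y,z)| ≤ 6·(‖x‖·L(y)·L(z) + ‖y‖·L(x)·L(z) + ‖z‖·L(x)·L(y)). -/
/-- The sup norm of an integer vector, as a real number. -/
def vnorm (v : Fin 3 → ℤ) : ℝ := max (max |(v 0 : ℝ)| |(v 1 : ℝ)|) |(v 2 : ℝ)|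

/-- The quantity `L(v) = max(|v₁ - v₀ξ|, |v₂ - v₀ξ²|)`. -/
def vL (ξ : ℝ) (v : Fin 3 → ℤ) : ℝ :=
  max |(v 1 : ℝ) - (v 0 : ℝ) * ξ| |(v 2 : ℝ) - (v 0 : ℝ) * ξ ^ 2|

/-!
Subtracting `ξ` times the first column from the second and `ξ²` times the first column from the
third does not change the determinant, and turns the rows into `(v₀, v₁ - v₀ξ, v₂ - v₀ξ²)`.
Expanding along the first column, each term is an entry `v₀` (at most `‖v‖`) times a `2 × 2`
minor of the reduced entries of the other two rows (at most `2 L L`).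
-/

def reducedMinor (ξ : ℝ) (u v : Fin 3 → ℤ) : ℝ :=
  ((u 1 : ℝ) - u 0 * ξ) * ((v 2 : ℝ) - v 0 * ξ ^ 2) -
    ((u 2 : ℝ) - u 0 * ξ ^ 2) * ((v 1 : ℝ) - v 0 * ξ)

lemma abs_zero_le_vnorm (v : Fin 3 → ℤ) : |(v 0 : ℝ)| ≤ vnorm v :=
  le_max_of_le_left (le_max_left _ _)

lemma vnorm_nonneg (v : Fin 3 → ℤ) : 0 ≤ vnorm v :=
  (abs_nonneg _).trans (abs_zero_le_vnorm v)

lemma vL_nonneg (ξ : ℝ) (v : Fin 3 → ℤ) : 0 ≤ vL ξ v :=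
  (abs_nonneg _).trans (le_max_left _ _)

lemma abs_mul_sub_mul_le {p q r s P Q : ℝ} (hp : |p| ≤ P) (hq : |q| ≤ Q) (hr : |r| ≤ P)
    (hs : |s| ≤ Q) : |p * s - r * q| ≤ 2 * (P * Q) :=
  calc |p * s - r * q| ≤ |p| * |s| + |r| * |q| := by
        rw [← abs_mul, ← abs_mul]; exact abs_sub _ _
    _ ≤ P * Q + P * Q :=
        add_le_add (mul_le_mul hp hs (abs_nonneg _) ((abs_nonneg _).trans hp))
          (mul_le_mul hr hq (abs_nonneg _) ((abs_nonneg _).trans hr))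
    _ = 2 * (P * Q) := by ring

lemma abs_reducedMinor_le (ξ : ℝ) (u v : Fin 3 → ℤ) :
    |reducedMinor ξ u v| ≤ 2 * (vL ξ u * vL ξ v) :=
  abs_mul_sub_mul_le (le_max_left _ _) (le_max_left _ _) (le_max_right _ _) (le_max_right _ _)

lemma det_eq_reducedMinor_expansion (ξ : ℝ) (x y z : Fin 3 → ℤ) :
    (((Matrix.of ![x, y, z]).det : ℤ) : ℝ) =
      x 0 * reducedMinor ξ y z - y 0 * reducedMinor ξ x z + z 0 * reducedMinor ξ x y := by
  simp only [Matrix.det_fin_three, reducedMinor, Matrix.of_apply, Matrix.cons_val_zero,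
    Matrix.cons_val_one, Matrix.cons_val_two, Matrix.head_cons, Matrix.tail_cons]
  push_cast
  ring

lemma abs_mul_reducedMinor_le (ξ : ℝ) (u v w : Fin 3 → ℤ) :
    |(u 0 : ℝ) * reducedMinor ξ v w| ≤ 2 * (vnorm u * vL ξ v * vL ξ w) := by
  rw [abs_mul, mul_assoc (vnorm u), mul_left_comm]
  exact mul_le_mul (abs_zero_le_vnorm u) (abs_reducedMinor_le ξ v w) (abs_nonneg _)
    (vnorm_nonneg u)

theorem stmt_1 (ξ : ℝ) (x y z : Fin 3 → ℤ) :
    |(((Matrix.of ![x, y, z]).det : ℤ) : ℝ)| ≤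
      6 * (vnorm x * vL ξ y * vL ξ z + vnorm y * vL ξ x * vL ξ z +
           vnorm z * vL ξ x * vL ξ y) := by
  rw [det_eq_reducedMinor_expansion ξ]
  have hx := abs_mul_reducedMinor_le ξ x y z
  have hy := abs_mul_reducedMinor_le ξ y x z
  have hz := abs_mul_reducedMinor_le ξ z x y
  have hxyz : 0 ≤ vnorm x * vL ξ y * vL ξ z + vnorm y * vL ξ x * vL ξ z +
      vnorm z * vL ξ x * vL ξ y := by
    have := vL_nonneg ξ x; have := vL_nonneg ξ y; have := vL_nonneg ξ z
    have := vnorm_nonneg x; have := vnorm_nonneg y; have := vnorm_nonneg z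
    positivity
  calc _ ≤ |(x 0 : ℝ) * reducedMinor ξ y z| + |(y 0 : ℝ) * reducedMinor ξ x z|
          + |(z 0 : ℝ) * reducedMinor ξ x y| :=
        (abs_add_le _ _).trans (by gcongr; exact abs_sub _ _)
    _ ≤ _ := by linarith
end

section
/- Let a be a positive integer, M = [[a,1],[-1,0]], and let (x_k) be a sequence of 2×2 symmetric matrices in GL₂(ℤ) with x_{k+1} = x_k S_k x_{k-1} (S_k = M for even k, Mᵀ for odd k). Writing x_k = [[x_{k,0}, x_{k,1}],[x_{k,1}, x_{k,2}]] and ε_k = det(x_k), the Cayley–Hamilton identity gives x_{k+2} = a·x_{k,0}·x_{k+1} - ε_k·x_{k-1} for all k ≥ 1. -/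
/-! Transposing the recurrence (all `x i` are symmetric and `S (k + 2) = (S (k + 1))ᵀ`) gives
`x (k + 2) = x k * Y` with `Y = S (k + 2) * x (k + 1)`, hence `x (k + 3) = x k * Y ^ 2`.
Cayley–Hamilton for the `2 × 2` matrix `Y` finishes: `det Y = det (x (k + 1))` since
`det (S _) = 1`, and `trace Y = a * x (k + 1) 0 0` because the off-diagonal part of `S _` is
antisymmetric while `x (k + 1)` is symmetric. -/

namespace Matrix

variable {R : Type*} [CommRing R]

theorem sq_fin_two_eq_trace_smul_sub_det_smul (A : Matrix (Fin 2) (Fin 2) R) :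
    A ^ 2 = A.trace • A - A.det • 1 := by
  ext i j
  fin_cases i <;> fin_cases j <;>
    simp [sq, mul_apply, trace_fin_two, det_fin_two] <;> ring

theorem trace_transpose_mul_of_isSymm {n : Type*} [Fintype n] {P : Matrix n n R}
    (hP : P.IsSymm) (A : Matrix n n R) : (Aᵀ * P).trace = (A * P).trace := by
  rw [← trace_transpose_mul, hP.eq, transpose_transpose, trace_mul_comm]

theorem trace_fin_two_of_mul_of_isSymm (a b c d : R) {P : Matrix (Fin 2) (Fin 2) R}
    (hP : P.IsSymm) : (!![a, b; c, d] * P).trace = a * P 0 0 + (b + c) * P 0 1 + d * P 1 1 := by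
  have h10 : P 1 0 = P 0 1 := hP.apply 0 1
  rw [P.eta_fin_two, mul_fin_two, trace_fin_two_of]
  simp only [of_apply, cons_val', cons_val_zero, cons_val_one, empty_val', cons_val_fin_one, h10]
  ring

end Matrix

open Matrix in
theorem stmt_11_general (a : ℤ)
    (S : ℕ → Matrix (Fin 2) (Fin 2) ℤ)
    (hS : ∀ k, S k = if Even k then !![a, 1; -1, 0] else (!![a, 1; -1, 0])ᵀ)
    (x : ℕ → Matrix (Fin 2) (Fin 2) ℤ)
    (hsym : ∀ k, (x k)ᵀ = x k)
    (hrec : ∀ k, x (k + 2) = x (k + 1) * S (k + 1) * x k) :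
    ∀ k, x (k + 3) = (a * x (k + 1) 0 0) • x (k + 2) - (x (k + 1)).det • x k := by
  intro k
  have hS_succ : S (k + 2) = (S (k + 1))ᵀ := by
    rcases Nat.even_or_odd k with h | h <;> simp [hS, parity_simps, h]
  have hx : x (k + 2) = x k * S (k + 2) * x (k + 1) := by
    rw [← hsym (k + 2), hrec k, hS_succ]
    simp only [transpose_mul, hsym, mul_assoc]
  have hdetS : (S (k + 2)).det = 1 := by
    rw [hS]; split_ifs <;> simp [det_fin_two_of]
  have htrace : (S (k + 2) * x (k + 1)).trace = a * x (k + 1) 0 0 := by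
    have hP : (x (k + 1)).IsSymm := hsym (k + 1)
    rw [hS]; split_ifs
    · rw [trace_fin_two_of_mul_of_isSymm _ _ _ _ hP]; ring
    · rw [trace_transpose_mul_of_isSymm hP, trace_fin_two_of_mul_of_isSymm _ _ _ _ hP]; ring
  calc x (k + 3) = x k * (S (k + 2) * x (k + 1)) ^ 2 := by
        rw [hrec (k + 1), hx, sq]; simp only [mul_assoc]
    _ = (a * x (k + 1) 0 0) • x (k + 2) - (x (k + 1)).det • x k := by
      rw [sq_fin_two_eq_trace_smul_sub_det_smul, htrace, det_mul, hdetS, one_mul, hx, mul_sub,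
        mul_smul_comm, mul_smul_comm, mul_one, mul_assoc]

open Matrix in
theorem stmt_11 (a : ℤ) (ha : 0 < a)
    (S : ℕ → Matrix (Fin 2) (Fin 2) ℤ)
    (hS : ∀ k, S k = if Even k then !![a, 1; -1, 0] else (!![a, 1; -1, 0])ᵀ)
    (x : ℕ → Matrix (Fin 2) (Fin 2) ℤ)
    (hsym : ∀ k, (x k)ᵀ = x k)
    (hunit : ∀ k, IsUnit (x k).det)
    (hrec : ∀ k, x (k + 2) = x (k + 1) * S (k + 1) * x k) :
    ∀ k, x (k + 3) = (a * x (k + 1) 0 0) • x (k + 2) - (x (k + 1)).det • x k :=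
  stmt_11_general a S hS x hsym hrec
end

section
/- Define a_k = x_{k,0}x_{k+1,1} - x_{k,1}x_{k+1,0}, b_k = -(x_{k,0}x_{k+1,2} - x_{k,2}x_{k+1,0}), c_k = x_{k,1}x_{k+1,2} - x_{k,2}x_{k+1,1}, where the x_k arise from the recurrence x_{k+1} = x_k S_k x_{k-1} with M = [[a,1],[-1,0]] as above. Then a_k = ε_k·(-1)^{k+1}·x_{k-1,0}, b_k = ε_k·(a·x_{k-1,0} + 2·(-1)^k·x_{k-1,1}), and c_k = ε_k·(-a·x_{k-1,1} - (-1)^k·x_{k-1,2}). -/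
/-!
With `J = !![0, 1; -1, 0]`, every `2 × 2` matrix satisfies `yᵀ J y = det y • J`. For symmetric
`y = x (k+1)` this turns `y J x (k+2) = y J y S x k` into `det y • J S x k`, and the three
quantities of the theorem are, by the symmetry of `x (k+1)` and `x (k+2)`, read off from the
entries of `y J x (k+2)`.
-/

/-- The matrix `S_k = A + (-1)^k J` with `A = [[a,0],[0,0]]`, `J = [[0,1],[-1,0]]`. -/
def Smat (a : ℤ) (k : ℕ) : Matrix (Fin 2) (Fin 2) ℤ :=
  !![a, 0; 0, 0] + ((-1 : ℤ) ^ k) • !![0, 1; -1, 0]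

namespace Matrix

variable {R : Type*} [CommRing R]

local notation "J" => (!![0, 1; -1, 0] : Matrix (Fin 2) (Fin 2) R)

theorem transpose_mul_J_mul_self (y : Matrix (Fin 2) (Fin 2) R) :
    yᵀ * J * y = y.det • J := by
  ext i j
  fin_cases i <;> fin_cases j <;> simp [det_fin_two, mul_apply, Fin.sum_univ_two] <;> ring

theorem entries_mul_J_mul_of_transpose_eq {y w : Matrix (Fin 2) (Fin 2) R}
    (hy : yᵀ = y) (hw : wᵀ = w) :
    y 0 0 * w 0 1 - y 0 1 * w 0 0 = (y * J * w) 0 0 ∧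
    -(y 0 0 * w 1 1 - y 1 1 * w 0 0) = -((y * J * w) 0 1 + (y * J * w) 1 0) ∧
    y 0 1 * w 1 1 - y 1 1 * w 0 1 = (y * J * w) 1 1 := by
  have hy₁₀ : y 1 0 = y 0 1 := by simpa using congrFun (congrFun hy 0) 1
  have hw₁₀ : w 1 0 = w 0 1 := by simpa using congrFun (congrFun hw 0) 1
  refine ⟨?_, ?_, ?_⟩ <;> simp [mul_apply, Fin.sum_univ_two, hy₁₀, hw₁₀] <;> ring

end Matrix

theorem J_mul_Smat_succ (a : ℤ) (n : ℕ) :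
    !![0, 1; -1, 0] * Smat a (n + 1) = !![(-1) ^ n, 0; -a, (-1) ^ n] := by
  ext i j
  fin_cases i <;> fin_cases j <;> simp [Smat, pow_succ]

open Matrix in
theorem stmt_13_general (a : ℤ)
    (x : ℕ → Matrix (Fin 2) (Fin 2) ℤ)
    (hsym : ∀ k, (x k)ᵀ = x k)
    (hrec : ∀ k, x (k + 2) = x (k + 1) * Smat a (k + 1) * x k) :
    ∀ k,
      x (k + 1) 0 0 * x (k + 2) 0 1 - x (k + 1) 0 1 * x (k + 2) 0 0 =
          (x (k + 1)).det * (-1 : ℤ) ^ k * x k 0 0 ∧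
      -(x (k + 1) 0 0 * x (k + 2) 1 1 - x (k + 1) 1 1 * x (k + 2) 0 0) =
          (x (k + 1)).det * (a * x k 0 0 + 2 * (-1 : ℤ) ^ (k + 1) * x k 0 1) ∧
      x (k + 1) 0 1 * x (k + 2) 1 1 - x (k + 1) 1 1 * x (k + 2) 0 1 =
          (x (k + 1)).det * (-(a * x k 0 1) - (-1 : ℤ) ^ (k + 1) * x k 1 1) := by
  intro k
  have hJ : x (k + 1) * !![0, 1; -1, 0] * x (k + 2) =
      (x (k + 1)).det • (!![(-1) ^ k, 0; -a, (-1) ^ k] * x k) := by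
    conv_lhs => rw [hrec, ← mul_assoc, ← mul_assoc]; enter [1, 1, 1]; rw [← hsym (k + 1)]
    rw [transpose_mul_J_mul_self, smul_mul_assoc, smul_mul_assoc, J_mul_Smat_succ]
  have hz₁₀ : x k 1 0 = x k 0 1 := by simpa using congrFun (congrFun (hsym k) 0) 1
  obtain ⟨h₁, h₂, h₃⟩ := entries_mul_J_mul_of_transpose_eq (hsym (k + 1)) (hsym (k + 2))
  rw [h₁, h₂, h₃, hJ]
  refine ⟨?_, ?_, ?_⟩ <;> simp [vecMul, dotProduct, Fin.sum_univ_two, hz₁₀, pow_succ] <;> ring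

open Matrix in
theorem stmt_13 (a : ℤ) (ha : 0 < a)
    (x : ℕ → Matrix (Fin 2) (Fin 2) ℤ)
    (hsym : ∀ k, (x k)ᵀ = x k)
    (hunit : ∀ k, IsUnit (x k).det)
    (hrec : ∀ k, x (k + 2) = x (k + 1) * Smat a (k + 1) * x k) :
    ∀ k,
      x (k + 1) 0 0 * x (k + 2) 0 1 - x (k + 1) 0 1 * x (k + 2) 0 0 =
          (x (k + 1)).det * (-1 : ℤ) ^ k * x k 0 0 ∧
      -(x (k + 1) 0 0 * x (k + 2) 1 1 - x (k + 1) 1 1 * x (k + 2) 0 0) =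
          (x (k + 1)).det * (a * x k 0 0 + 2 * (-1 : ℤ) ^ (k + 1) * x k 0 1) ∧
      x (k + 1) 0 1 * x (k + 2) 1 1 - x (k + 1) 1 1 * x (k + 2) 0 1 =
          (x (k + 1)).det * (-(a * x k 0 1) - (-1 : ℤ) ^ (k + 1) * x k 1 1) :=
  stmt_13_general a x hsym hrec
end

section
/- With a_k, b_k, c_k as defined from the recurrence sequence x_k (extremal-number setup with matrix M = [[a,1],[-1,0]]), the determinant of the 3×3 matrix with rows x_{k-1}, x_k, x_{k+1} (each viewed as a vector in ℤ³) equals 2·ε_{k+1}·(-1)^{k+1}, i.e. det(x_{k-1}, x_k, x_{k+1}) = a_k·x_{k-1,2} + b_k·x_{k-1,1} + c_k·x_{k-1,0} = 2·ε_{k+1}·(-1)^{k+1}. -/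
open Matrix

section

variable {R : Type*} [CommRing R]

theorem det_fin_three_eq_expansion_row_zero (u₀ u₁ u₂ v₀ v₁ v₂ w₀ w₁ w₂ : R) :
    !![u₀, u₁, u₂; v₀, v₁, v₂; w₀, w₁, w₂].det =
      (v₀ * w₁ - v₁ * w₀) * u₂ + -(v₀ * w₂ - v₂ * w₀) * u₁ + (v₁ * w₂ - v₂ * w₁) * u₀ := by
  rw [det_fin_three]
  simp only [of_apply, cons_val', cons_val_zero, cons_val_one, cons_val_two, empty_val',
    cons_val_fin_one, head_cons, tail_cons, head_fin_const]
  ring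

theorem expansion_row_zero_of_isSymm_mul_mul {X Y Z : Matrix (Fin 2) (Fin 2) R} (a s : R)
    (hX : X.IsSymm) (hY : Y.IsSymm) (hZ : Z.IsSymm)
    (hZXY : Z = Y * (!![a, 0; 0, 0] + s • !![0, 1; -1, 0]) * X) :
    (Y 0 0 * Z 0 1 - Y 0 1 * Z 0 0) * X 1 1 + -(Y 0 0 * Z 1 1 - Y 1 1 * Z 0 0) * X 0 1
      + (Y 0 1 * Z 1 1 - Y 1 1 * Z 0 1) * X 0 0 = -2 * s * X.det * Y.det := by
  have hZ10 : Z 1 0 = Z 0 1 := hZ.apply 0 1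
  subst hZXY
  simp only [smul_of, smul_cons, smul_eq_mul, mul_zero, mul_one, smul_empty, mul_neg, of_add_of,
    add_cons, head_cons, add_zero, tail_cons, zero_add, empty_add_empty, mul_apply, of_apply,
    cons_val', cons_val_fin_one, Fin.sum_univ_two, hY.apply 0 1, cons_val_zero, cons_val_one,
    hX.apply 0 1, neg_sub, neg_mul, det_fin_two] at hZ10 ⊢
  linear_combination (X 0 1 * Y 0 1 - X 1 1 * Y 0 0) * hZ10

end

theorem det_Smat (a : ℤ) (k : ℕ) : (Smat a k).det = 1 := by
  simp [Smat, det_fin_two, ← mul_pow]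

open Matrix in
theorem stmt_14_general (a : ℤ)
    (x : ℕ → Matrix (Fin 2) (Fin 2) ℤ)
    (hsym : ∀ k, (x k)ᵀ = x k)
    (hrec : ∀ k, x (k + 2) = x (k + 1) * Smat a (k + 1) * x k) :
    ∀ k,
      let ak := x (k + 1) 0 0 * x (k + 2) 0 1 - x (k + 1) 0 1 * x (k + 2) 0 0
      let bk := -(x (k + 1) 0 0 * x (k + 2) 1 1 - x (k + 1) 1 1 * x (k + 2) 0 0)
      let ck := x (k + 1) 0 1 * x (k + 2) 1 1 - x (k + 1) 1 1 * x (k + 2) 0 1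
      (!![x k 0 0, x k 0 1, x k 1 1;
          x (k + 1) 0 0, x (k + 1) 0 1, x (k + 1) 1 1;
          x (k + 2) 0 0, x (k + 2) 0 1, x (k + 2) 1 1] : Matrix (Fin 3) (Fin 3) ℤ).det =
        ak * x k 1 1 + bk * x k 0 1 + ck * x k 0 0 ∧
      ak * x k 1 1 + bk * x k 0 1 + ck * x k 0 0 =
        2 * (x (k + 2)).det * (-1 : ℤ) ^ k := by
  intro k ak bk ck
  refine ⟨det_fin_three_eq_expansion_row_zero .., ?_⟩
  rw [expansion_row_zero_of_isSymm_mul_mul a _ (hsym k) (hsym (k + 1)) (hsym (k + 2)) (hrec k),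
    hrec k, det_mul, det_mul, det_Smat]
  ring

open Matrix in
theorem stmt_14 (a : ℤ) (ha : 0 < a)
    (x : ℕ → Matrix (Fin 2) (Fin 2) ℤ)
    (hsym : ∀ k, (x k)ᵀ = x k)
    (hunit : ∀ k, IsUnit (x k).det)
    (hrec : ∀ k, x (k + 2) = x (k + 1) * Smat a (k + 1) * x k) :
    ∀ k,
      let ak := x (k + 1) 0 0 * x (k + 2) 0 1 - x (k + 1) 0 1 * x (k + 2) 0 0
      let bk := -(x (k + 1) 0 0 * x (k + 2) 1 1 - x (k + 1) 1 1 * x (k + 2) 0 0)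
      let ck := x (k + 1) 0 1 * x (k + 2) 1 1 - x (k + 1) 1 1 * x (k + 2) 0 1
      (!![x k 0 0, x k 0 1, x k 1 1;
          x (k + 1) 0 0, x (k + 1) 0 1, x (k + 1) 1 1;
          x (k + 2) 0 0, x (k + 2) 0 1, x (k + 2) 1 1] : Matrix (Fin 3) (Fin 3) ℤ).det =
        ak * x k 1 1 + bk * x k 0 1 + ck * x k 0 0 ∧
      ak * x k 1 1 + bk * x k 0 1 + ck * x k 0 0 =
        2 * (x (k + 2)).det * (-1 : ℤ) ^ k :=
  stmt_14_general a x hsym hrec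
end

section
/- Let ξ be a real number with [ℚ(ξ):ℚ] > 2, and suppose there is a constant c > 0, a sequence of non-zero points x_k = (x_{k,0}, x_{k,1}, x_{k,2}) ∈ ℤ³ and an unbounded increasing sequence X_k of positive reals such that ‖x_k‖ ≤ X_k and L(x_k) := max(|x_{k,1} - x_{k,0}ξ|, |x_{k,2} - x_{k,0}ξ²|) ≤ c·X_{k+1}^{-λ} with λ > 1/γ (γ the golden ratio), and X_{k+1} ≤ C·X_k^γ for some C. Suppose in addition that det(x_k) = x_{k,0}x_{k,2} - x_{k,1}² ≠ 0 for all large k, and that for infinitely many k the three consecutive points x_{k-1}, x_k, x_{k+1} are linearly independent over ℚ. Then these hypotheses are contradictory for k large: the lower bound 1 ≤ |det(x_k)| ≤ 3(1+|ξ|)²·X_k·L(x_k) forces λ² + λ ≤ 1, i.e. λ ≤ 1/γ, contradicting λ > 1/γ. -/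
private lemma abs_pair (a b cc d sa sb : ℝ) (ha : |a| ≤ sa) (hb : |b| ≤ sb)
    (hcc : |cc| ≤ sb) (hd : |d| ≤ sa) : |a*b - cc*d| ≤ 2*(sa*sb) := by
  have h1 : |a*b| ≤ sa*sb := by
    rw [abs_mul]; exact mul_le_mul ha hb (abs_nonneg _) ((abs_nonneg a).trans ha)
  have h2 : |cc*d| ≤ sa*sb := by
    rw [abs_mul, mul_comm sa sb]
    exact mul_le_mul hcc hd (abs_nonneg _) ((abs_nonneg cc).trans hcc)
  calc |a*b - cc*d| ≤ |a*b| + |cc*d| := abs_sub _ _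
    _ ≤ 2*(sa*sb) := by linarith

private lemma det3_bound (ξ p0 p1 p2 q0 q1 q2 r0 r1 r2 Xp Xq Xr sp sq sr : ℝ)
    (hp0 : |p0| ≤ Xp) (hq0 : |q0| ≤ Xq) (hr0 : |r0| ≤ Xr)
    (hp1 : |p1 - p0*ξ| ≤ sp) (hp2 : |p2 - p0*ξ^2| ≤ sp)
    (hq1 : |q1 - q0*ξ| ≤ sq) (hq2 : |q2 - q0*ξ^2| ≤ sq)
    (hr1 : |r1 - r0*ξ| ≤ sr) (hr2 : |r2 - r0*ξ^2| ≤ sr) :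
    |p0*(q1*r2 - q2*r1) - q0*(p1*r2 - p2*r1) + r0*(p1*q2 - p2*q1)|
      ≤ 2*(Xp*(sq*sr) + Xq*(sp*sr) + Xr*(sp*sq)) := by
  have hid : p0*(q1*r2 - q2*r1) - q0*(p1*r2 - p2*r1) + r0*(p1*q2 - p2*q1)
      = p0*((q1-q0*ξ)*(r2-r0*ξ^2) - (r1-r0*ξ)*(q2-q0*ξ^2))
        - q0*((p1-p0*ξ)*(r2-r0*ξ^2) - (r1-r0*ξ)*(p2-p0*ξ^2))
        + r0*((p1-p0*ξ)*(q2-q0*ξ^2) - (q1-q0*ξ)*(p2-p0*ξ^2)) := by ring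
  rw [hid]
  have b1 : |p0*((q1-q0*ξ)*(r2-r0*ξ^2) - (r1-r0*ξ)*(q2-q0*ξ^2))| ≤ Xp*(2*(sq*sr)) := by
    rw [abs_mul]
    exact mul_le_mul hp0 (abs_pair _ _ _ _ _ _ hq1 hr2 hr1 hq2) (abs_nonneg _)
      ((abs_nonneg p0).trans hp0)
  have b2 : |q0*((p1-p0*ξ)*(r2-r0*ξ^2) - (r1-r0*ξ)*(p2-p0*ξ^2))| ≤ Xq*(2*(sp*sr)) := by
    rw [abs_mul]
    exact mul_le_mul hq0 (abs_pair _ _ _ _ _ _ hp1 hr2 hr1 hp2) (abs_nonneg _)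
      ((abs_nonneg q0).trans hq0)
  have b3 : |r0*((p1-p0*ξ)*(q2-q0*ξ^2) - (q1-q0*ξ)*(p2-p0*ξ^2))| ≤ Xr*(2*(sp*sq)) := by
    rw [abs_mul]
    exact mul_le_mul hr0 (abs_pair _ _ _ _ _ _ hp1 hq2 hq1 hp2) (abs_nonneg _)
      ((abs_nonneg r0).trans hr0)
  set t1 := p0*((q1-q0*ξ)*(r2-r0*ξ^2) - (r1-r0*ξ)*(q2-q0*ξ^2))
  set t2 := q0*((p1-p0*ξ)*(r2-r0*ξ^2) - (r1-r0*ξ)*(p2-p0*ξ^2))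
  set t3 := r0*((p1-p0*ξ)*(q2-q0*ξ^2) - (q1-q0*ξ)*(p2-p0*ξ^2))
  have step1 : |t1 - t2 + t3| ≤ |t1 - t2| + |t3| := abs_add_le _ _
  have step2 : |t1 - t2| ≤ |t1| + |t2| := abs_sub _ _
  linarith

private lemma key_combine (A c2 lam Y Z : ℝ) (hA : 0 < A) (hc2 : 0 < c2) (hlam : 0 < lam)
    (hZ : 0 < Z) (hY : 0 < Y)
    (h1 : 1 ≤ A * Z * Y^(-lam)) (h2 : 1 ≤ c2 * (Y * (Z^(-lam) * Y^(-lam)))) :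
    Y^(lam^2 + lam - 1) ≤ A^lam * c2 := by
  have hYl : (0:ℝ) < Y ^ (-lam) := Real.rpow_pos_of_pos hY _
  have hZl : (0:ℝ) < Z ^ (-lam) := Real.rpow_pos_of_pos hZ _
  have e1 : Y^(-lam) * Y^lam = 1 := by
    rw [← Real.rpow_add hY]; simp
  have e2 : Z^(-lam) * Z^lam = 1 := by
    rw [← Real.rpow_add hZ]; simp
  -- from h1 : Y^lam ≤ A * Z
  have k1 : Y^lam ≤ A * Z := by
    have := mul_le_mul_of_nonneg_right h1 (Real.rpow_pos_of_pos hY lam).le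
    calc Y^lam = 1 * Y^lam := (one_mul _).symm
      _ ≤ A * Z * Y^(-lam) * Y^lam := this
      _ = A * Z * (Y^(-lam) * Y^lam) := by ring
      _ = A * Z := by rw [e1, mul_one]
  -- raise to lam
  have k2 : Y^(lam*lam) ≤ A^lam * Z^lam := by
    have h' : (Y^lam)^lam ≤ (A*Z)^lam :=
      Real.rpow_le_rpow (Real.rpow_pos_of_pos hY _).le k1 hlam.le
    rw [← Real.rpow_mul hY.le] at h'
    rwa [Real.mul_rpow hA.le hZ.le] at h'
  -- from h2 : Z^lam ≤ c2 * Y^(1-lam)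
  have k3 : Z^lam ≤ c2 * Y^(1-lam) := by
    have := mul_le_mul_of_nonneg_right h2 (Real.rpow_pos_of_pos hZ lam).le
    calc Z^lam = 1 * Z^lam := (one_mul _).symm
      _ ≤ c2 * (Y * (Z^(-lam) * Y^(-lam))) * Z^lam := this
      _ = c2 * (Y * Y^(-lam)) * (Z^(-lam) * Z^lam) := by ring
      _ = c2 * (Y * Y^(-lam)) := by rw [e2, mul_one]
      _ = c2 * Y^(1-lam) := by
          rw [show (1-lam) = 1 + (-lam) by ring, Real.rpow_add hY, Real.rpow_one]
  have k4 : Y^(lam*lam) ≤ A^lam * c2 * Y^(1-lam) := by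
    calc Y^(lam*lam) ≤ A^lam * Z^lam := k2
      _ ≤ A^lam * (c2 * Y^(1-lam)) :=
        mul_le_mul_of_nonneg_left k3 (Real.rpow_pos_of_pos hA _).le
      _ = A^lam * c2 * Y^(1-lam) := by ring
  have e3 : Y^(lam^2+lam-1) * Y^(1-lam) = Y^(lam*lam) := by
    rw [← Real.rpow_add hY]; ring_nf
  have h1l : (0:ℝ) < Y^(1-lam) := Real.rpow_pos_of_pos hY _
  rw [← mul_le_mul_iff_of_pos_right h1l, e3]
  exact k4

theorem stmt_18 (ξ : ℝ)
    (hξ : ∀ r s t : ℤ, (r : ℝ) + s * ξ + t * ξ ^ 2 = 0 → r = 0 ∧ s = 0 ∧ t = 0)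
    (c C lam : ℝ) (hc : 0 < c) (hC : 0 < C)
    (x : ℕ → Fin 3 → ℤ) (hx : ∀ k, x k ≠ 0)
    (X : ℕ → ℝ) (hX1 : ∀ k, 1 ≤ X k) (hXmono : StrictMono X)
    (hXunb : ∀ B : ℝ, ∃ k, B < X k)
    (hnorm : ∀ k i, |(x k i : ℝ)| ≤ X k)
    (hL : ∀ k, max |(x k 1 : ℝ) - (x k 0 : ℝ) * ξ| |(x k 2 : ℝ) - (x k 0 : ℝ) * ξ ^ 2| ≤
      c * X (k + 1) ^ (-lam))
    (hgrow : ∀ k, X (k + 1) ≤ C * X k ^ ((1 + Real.sqrt 5) / 2))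
    (hdet : ∃ K, ∀ k ≥ K, x k 0 * x k 2 - (x k 1) ^ 2 ≠ 0)
    (hindep : ∀ N, ∃ k ≥ N,
      (Matrix.of (fun i j : Fin 3 => (x (k + (i : ℕ)) j : ℚ))).det ≠ 0) :
    lam ≤ 1 / ((1 + Real.sqrt 5) / 2) := by
  by_contra hcon
  push_neg at hcon
  have hs5 : Real.sqrt 5 ^ 2 = 5 := Real.sq_sqrt (by norm_num)
  have hs5pos : (2:ℝ) < Real.sqrt 5 := by nlinarith [Real.sqrt_nonneg 5]
  have hγ : (0:ℝ) < (1 + Real.sqrt 5) / 2 := by linarith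
  have hinv : 1 / ((1 + Real.sqrt 5) / 2) = (Real.sqrt 5 - 1) / 2 := by
    rw [div_eq_iff hγ.ne']
    nlinarith
  rw [hinv] at hcon
  have hlam : 0 < lam := by nlinarith
  set μ := lam^2 + lam - 1 with hμdef
  have hμ : 0 < μ := by nlinarith
  -- constants
  set A := (2 + |ξ|) * c with hAdef
  have hA : 0 < A := by positivity
  set c2 := 6 * c^2 with hc2def
  have hc2 : (0:ℝ) < c2 := by positivity
  set B := A ^ lam * c2 with hBdef
  have hB : 0 < B := mul_pos (Real.rpow_pos_of_pos hA _) hc2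
  obtain ⟨K, hK⟩ := hdet
  obtain ⟨m, hm⟩ := hXunb (B ^ (1/μ))
  obtain ⟨k, hkN, hkdet⟩ := hindep (max m K)
  have hkm : m ≤ k := le_trans (le_max_left _ _) hkN
  have hkK : K ≤ k := le_trans (le_max_right _ _) hkN
  have hXpos : ∀ j, (0:ℝ) < X j := fun j => lt_of_lt_of_le one_pos (hX1 j)
  -- lower bound : X(k+2)^μ > B
  have hbig : B < X (k+2) ^ μ := by
    have h1 : B ^ (1/μ) < X (k+2) := lt_of_lt_of_le hm
      (hXmono.le_iff_le.mpr (by omega))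
    have := Real.rpow_lt_rpow (Real.rpow_nonneg hB.le _) h1 hμ
    rwa [← Real.rpow_mul hB.le, one_div_mul_cancel hμ.ne', Real.rpow_one] at this
  -- small quantities
  have hL1 : ∀ j, |(x j 1 : ℝ) - (x j 0 : ℝ) * ξ| ≤ c * X (j+1) ^ (-lam) :=
    fun j => (le_max_left _ _).trans (hL j)
  have hL2 : ∀ j, |(x j 2 : ℝ) - (x j 0 : ℝ) * ξ ^ 2| ≤ c * X (j+1) ^ (-lam) :=
    fun j => (le_max_right _ _).trans (hL j)
  -- two-point det at k+1
  have h2pt : 1 ≤ A * X (k+1) * X (k+2) ^ (-lam) := by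
    have hd : x (k+1) 0 * x (k+1) 2 - (x (k+1) 1)^2 ≠ 0 := hK (k+1) (by omega)
    have hd1 : (1:ℝ) ≤ |((x (k+1) 0 * x (k+1) 2 - (x (k+1) 1)^2 : ℤ) : ℝ)| := by
      rw [← Int.cast_abs]
      exact_mod_cast Int.one_le_abs (by exact_mod_cast hd)
    set p0 := ((x (k+1) 0 : ℤ) : ℝ)
    set p1 := ((x (k+1) 1 : ℤ) : ℝ)
    set p2 := ((x (k+1) 2 : ℤ) : ℝ)
    have hid : ((x (k+1) 0 * x (k+1) 2 - (x (k+1) 1)^2 : ℤ) : ℝ)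
        = p0*(p2 - p0*ξ^2) - (p1 - p0*ξ)*(p1 + p0*ξ) := by push_cast; ring
    have hb1 : |p0*(p2 - p0*ξ^2)| ≤ X (k+1) * (c * X (k+2) ^ (-lam)) := by
      rw [abs_mul]
      exact mul_le_mul (hnorm (k+1) 0)
        (hL2 (k+1)) (abs_nonneg _) (hXpos _).le
    have hb2 : |(p1 - p0*ξ)*(p1 + p0*ξ)| ≤ (c * X (k+2) ^ (-lam)) * (X (k+1) * (1 + |ξ|)) := by
      rw [abs_mul]
      refine mul_le_mul (hL1 (k+1)) ?_ (abs_nonneg _)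
        (mul_pos hc (Real.rpow_pos_of_pos (hXpos _) _)).le
      calc |p1 + p0*ξ| ≤ |p1| + |p0*ξ| := abs_add_le _ _
        _ ≤ X (k+1) + X (k+1) * |ξ| := by
            rw [abs_mul]
            have h0 := mul_le_mul_of_nonneg_right (hnorm (k+1) 0) (abs_nonneg ξ)
            have h1 := hnorm (k+1) 1
            linarith
        _ = X (k+1) * (1 + |ξ|) := by ring
    have hXl : (0:ℝ) < X (k+2) ^ (-lam) := Real.rpow_pos_of_pos (hXpos _) _
    calc (1:ℝ) ≤ |((x (k+1) 0 * x (k+1) 2 - (x (k+1) 1)^2 : ℤ) : ℝ)| := hd1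
      _ = |p0*(p2 - p0*ξ^2) - (p1 - p0*ξ)*(p1 + p0*ξ)| := by rw [hid]
      _ ≤ |p0*(p2 - p0*ξ^2)| + |(p1 - p0*ξ)*(p1 + p0*ξ)| := abs_sub _ _
      _ ≤ X (k+1) * (c * X (k+2) ^ (-lam)) + (c * X (k+2) ^ (-lam)) * (X (k+1) * (1+|ξ|)) := by
          linarith
      _ = A * X (k+1) * X (k+2) ^ (-lam) := by rw [hAdef]; ring
  -- three-point det
  have h3pt : 1 ≤ c2 * (X (k+2) * (X (k+1) ^ (-lam) * X (k+2) ^ (-lam))) := by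
    set D : ℤ := x k 0 * (x (k+1) 1 * x (k+2) 2) - x k 0 * (x (k+1) 2 * x (k+2) 1)
      - x k 1 * (x (k+1) 0 * x (k+2) 2) + x k 1 * (x (k+1) 2 * x (k+2) 0)
      + x k 2 * (x (k+1) 0 * x (k+2) 1) - x k 2 * (x (k+1) 1 * x (k+2) 0) with hDdef
    have hDne : D ≠ 0 := by
      rw [Matrix.det_fin_three] at hkdet
      simp only [Matrix.of_apply] at hkdet
      norm_num at hkdet
      intro h
      apply hkdet
      have : ((D : ℤ) : ℚ) = 0 := by exact_mod_cast h
      rw [hDdef] at this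
      push_cast at this
      linarith [this]
    have hd1 : (1:ℝ) ≤ |((D : ℤ) : ℝ)| := by
      rw [← Int.cast_abs]
      exact_mod_cast Int.one_le_abs hDne
    set p0 := ((x k 0 : ℤ) : ℝ); set p1 := ((x k 1 : ℤ) : ℝ); set p2 := ((x k 2 : ℤ) : ℝ)
    set q0 := ((x (k+1) 0 : ℤ) : ℝ); set q1 := ((x (k+1) 1 : ℤ) : ℝ)
    set q2 := ((x (k+1) 2 : ℤ) : ℝ)
    set r0 := ((x (k+2) 0 : ℤ) : ℝ); set r1 := ((x (k+2) 1 : ℤ) : ℝ)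
    set r2 := ((x (k+2) 2 : ℤ) : ℝ)
    have hid : ((D : ℤ) : ℝ)
        = p0*(q1*r2 - q2*r1) - q0*(p1*r2 - p2*r1) + r0*(p1*q2 - p2*q1) := by
      rw [hDdef]; push_cast; ring
    set a := c * X (k+1) ^ (-lam) with hadef
    set b := c * X (k+2) ^ (-lam) with hbdef
    have hapos : 0 < a := mul_pos hc (Real.rpow_pos_of_pos (hXpos _) _)
    have hbpos : 0 < b := mul_pos hc (Real.rpow_pos_of_pos (hXpos _) _)
    have hanti : ∀ i j : ℕ, i ≤ j → X j ^ (-lam) ≤ X i ^ (-lam) := fun i j hij =>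
      Real.rpow_le_rpow_of_nonpos (hXpos _) (hXmono.monotone hij) (by linarith)
    have hba : b ≤ a :=
      mul_le_mul_of_nonneg_left (hanti (k+1) (k+2) (by omega)) hc.le
    have hXle : ∀ j : ℕ, j ≤ k + 2 → ∀ i : Fin 3, |((x j i : ℤ) : ℝ)| ≤ X (k+2) :=
      fun j hj i => (hnorm j i).trans (hXmono.monotone hj)
    have hbound := det3_bound ξ p0 p1 p2 q0 q1 q2 r0 r1 r2
      (X (k+2)) (X (k+2)) (X (k+2)) a b b
      (hXle k (by omega) 0) (hXle (k+1) (by omega) 0) (hXle (k+2) (by omega) 0)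
      (hL1 k) (hL2 k) (hL1 (k+1)) (hL2 (k+1))
      ((hL1 (k+2)).trans
        (mul_le_mul_of_nonneg_left (hanti (k+2) (k+3) (by omega)) hc.le))
      ((hL2 (k+2)).trans
        (mul_le_mul_of_nonneg_left (hanti (k+2) (k+3) (by omega)) hc.le))
    have hfin : 2*(X (k+2)*(b*b) + X (k+2)*(a*b) + X (k+2)*(a*b))
        ≤ 6 * (X (k+2) * (a*b)) := by
      nlinarith [mul_nonneg (mul_nonneg (hXpos (k+2)).le hbpos.le) (sub_nonneg.mpr hba)]
    have : (1:ℝ) ≤ 6 * (X (k+2) * (a*b)) := by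
      calc (1:ℝ) ≤ |((D : ℤ) : ℝ)| := hd1
        _ = |p0*(q1*r2 - q2*r1) - q0*(p1*r2 - p2*r1) + r0*(p1*q2 - p2*q1)| := by rw [hid]
        _ ≤ 2*(X (k+2)*(b*b) + X (k+2)*(a*b) + X (k+2)*(a*b)) := hbound
        _ ≤ 6 * (X (k+2) * (a*b)) := hfin
    calc (1:ℝ) ≤ 6 * (X (k+2) * (a*b)) := this
      _ = c2 * (X (k+2) * (X (k+1) ^ (-lam) * X (k+2) ^ (-lam))) := by
          rw [hadef, hbdef, hc2def]; ring
  have := key_combine A c2 lam (X (k+2)) (X (k+1)) hA hc2 hlam (hXpos _) (hXpos _) h2pt h3pt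
  rw [← hμdef, ← hBdef] at this
  linarith
end

section
/- Let γ = (1+√5)/2 and let ξ be an extremal real number: there exist C ≥ 1, an increasing unbounded sequence of positive integers (X_k) and non-zero points x_k ∈ ℤ³ with C⁻¹X_k^γ ≤ X_{k+1} ≤ C·X_k^γ, ‖x_k‖ ≤ C·X_k, and max(|x_{k,1}-x_{k,0}ξ|, |x_{k,2}-x_{k,0}ξ²|) ≤ C·X_k^{-1}. If additionally 1 ≤ |det(x_k)| ≤ C and 1 ≤ |det(x_k, x_{k+1}, x_{k+2})| ≤ C for all k, then ξ is neither rational nor quadratic over ℚ. -/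
/-!
If `r + s ξ + t ξ² = 0`, the integer `r x₀ + s x₁ + t x₂` equals
`s (x₁ - x₀ ξ) + t (x₂ - x₀ ξ²)`, so along the sequence `x k` it is `O(X_k⁻¹)` and hence vanishes
for large `k`. Then three consecutive points `x k` are orthogonal to the nonzero vector `(r, s, t)`,
so their determinant is zero, contradicting `1 ≤ |det (x k, x (k+1), x (k+2))|`.
-/

open Filter Matrix Topology

theorem abs_dotProduct_le_of_quadratic_eq_zero {ξ ε : ℝ} {r s t : ℤ}
    (h : (r : ℝ) + s * ξ + t * ξ ^ 2 = 0) (v : Fin 3 → ℤ)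
    (hv : max |(v 1 : ℝ) - v 0 * ξ| |(v 2 : ℝ) - v 0 * ξ ^ 2| ≤ ε) :
    |((v ⬝ᵥ ![r, s, t] : ℤ) : ℝ)| ≤ (|(s : ℝ)| + |(t : ℝ)|) * ε := by
  have hv₁ := (le_max_left _ _).trans hv
  have hv₂ := (le_max_right _ _).trans hv
  have key : ((v ⬝ᵥ ![r, s, t] : ℤ) : ℝ) =
      s * ((v 1 : ℝ) - v 0 * ξ) + t * ((v 2 : ℝ) - v 0 * ξ ^ 2) + v 0 * (r + s * ξ + t * ξ ^ 2) := by
    simp only [dotProduct, Fin.sum_univ_three]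
    push_cast
    ring
  rw [key, h, mul_zero, add_zero]
  calc _ ≤ |(s : ℝ)| * |(v 1 : ℝ) - v 0 * ξ| + |(t : ℝ)| * |(v 2 : ℝ) - v 0 * ξ ^ 2| :=
        (abs_add_le _ _).trans_eq (by rw [abs_mul, abs_mul])
    _ ≤ (|(s : ℝ)| + |(t : ℝ)|) * ε := by
        rw [add_mul]; gcongr

theorem eventually_dotProduct_eq_zero_of_quadratic_eq_zero {ξ C : ℝ} {X : ℕ → ℤ}
    (hX : Tendsto X atTop atTop) {x : ℕ → Fin 3 → ℤ}
    (hL : ∀ k, max |(x k 1 : ℝ) - x k 0 * ξ| |(x k 2 : ℝ) - x k 0 * ξ ^ 2| ≤ C * (X k : ℝ)⁻¹)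
    {r s t : ℤ} (h : (r : ℝ) + s * ξ + t * ξ ^ 2 = 0) :
    ∀ᶠ k in atTop, x k ⬝ᵥ ![r, s, t] = 0 := by
  have hsmall : Tendsto (fun k ↦ (|(s : ℝ)| + |(t : ℝ)|) * (C * (X k : ℝ)⁻¹)) atTop (𝓝 0) := by
    have hXinv := tendsto_inv_atTop_zero.comp (tendsto_intCast_atTop_iff (R := ℝ) |>.mpr hX)
    simpa using (hXinv.const_mul C).const_mul (|(s : ℝ)| + |(t : ℝ)|)
  filter_upwards [hsmall.eventually (gt_mem_nhds zero_lt_one)] with k hk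
  have : |((x k ⬝ᵥ ![r, s, t] : ℤ) : ℝ)| < 1 :=
    (abs_dotProduct_le_of_quadratic_eq_zero h (x k) (hL k)).trans_lt hk
  exact Int.abs_lt_one_iff.mp (by exact_mod_cast this)

theorem stmt_19_general (ξ : ℝ) (C : ℝ)
    (X : ℕ → ℤ) (hXmono : StrictMono X)
    (hXunb : ∀ B : ℤ, ∃ k, B < X k)
    (x : ℕ → Fin 3 → ℤ)
    (hL : ∀ k, max |(x k 1 : ℝ) - (x k 0 : ℝ) * ξ| |(x k 2 : ℝ) - (x k 0 : ℝ) * ξ ^ 2| ≤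
      C * (X k : ℝ)⁻¹)
    (hdet3 : ∀ k, 1 ≤ |(Matrix.of (fun i j : Fin 3 => x (k + (i : ℕ)) j)).det| ∧
      (|(Matrix.of (fun i j : Fin 3 => x (k + (i : ℕ)) j)).det| : ℝ) ≤ C) :
    ∀ r s t : ℤ, (r : ℝ) + s * ξ + t * ξ ^ 2 = 0 → r = 0 ∧ s = 0 ∧ t = 0 := by
  intro r s t h
  by_contra hne
  have hw : ![r, s, t] ≠ 0 := fun hw ↦ hne ⟨congrFun hw 0, congrFun hw 1, congrFun hw 2⟩
  have hX : Tendsto X atTop atTop :=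
    tendsto_atTop_atTop_of_monotone hXmono.monotone fun B ↦ (hXunb B).imp fun _ ↦ le_of_lt
  obtain ⟨k₀, hk₀⟩ :=
    (eventually_dotProduct_eq_zero_of_quadratic_eq_zero hX hL h).exists_forall_of_atTop
  have hdet : (Matrix.of fun i j : Fin 3 ↦ x (k₀ + i) j).det = 0 :=
    exists_mulVec_eq_zero_iff.mp ⟨_, hw, funext fun i ↦ hk₀ _ (Nat.le_add_right _ _)⟩
  simpa [hdet] using (hdet3 k₀).1

theorem stmt_19 (ξ : ℝ) (C : ℝ) (hC : 1 ≤ C)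
    (X : ℕ → ℤ) (hXpos : ∀ k, 0 < X k) (hXmono : StrictMono X)
    (hXunb : ∀ B : ℤ, ∃ k, B < X k)
    (x : ℕ → Fin 3 → ℤ) (hx : ∀ k, x k ≠ 0)
    (hgrow : ∀ k, C⁻¹ * (X k : ℝ) ^ ((1 + Real.sqrt 5) / 2) ≤ (X (k + 1) : ℝ) ∧
      (X (k + 1) : ℝ) ≤ C * (X k : ℝ) ^ ((1 + Real.sqrt 5) / 2))
    (hnorm : ∀ k i, |(x k i : ℝ)| ≤ C * (X k : ℝ))
    (hL : ∀ k, max |(x k 1 : ℝ) - (x k 0 : ℝ) * ξ| |(x k 2 : ℝ) - (x k 0 : ℝ) * ξ ^ 2| ≤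
      C * (X k : ℝ)⁻¹)
    (hdet2 : ∀ k, 1 ≤ |x k 0 * x k 2 - (x k 1) ^ 2| ∧
      (|x k 0 * x k 2 - (x k 1) ^ 2| : ℝ) ≤ C)
    (hdet3 : ∀ k, 1 ≤ |(Matrix.of (fun i j : Fin 3 => x (k + (i : ℕ)) j)).det| ∧
      (|(Matrix.of (fun i j : Fin 3 => x (k + (i : ℕ)) j)).det| : ℝ) ≤ C) :
    ∀ r s t : ℤ, (r : ℝ) + s * ξ + t * ξ ^ 2 = 0 → r = 0 ∧ s = 0 ∧ t = 0 :=
  stmt_19_general ξ C X hXmono hXunb x hL hdet3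
end
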